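/- Let k be a natural number. The map which sends a set U ⊆ V to the function f_U : V → Bool × Bool defined by f_U(v) := (decide(v ∈ U), decide(v ∈ N⁺[U])) is a bijection from { U ⊆ V : |U| ≤ k } onto Sol_k. -/

import Mathlib

/-- The closed neighbourhood `N⁺[v] = {v} ∪ N(v)` of a vertex. -/
def closedNbhd {V : Type*} [Fintype V] [DecidableEq V]
    (G : SimpleGraph V) [DecidableRel G.Adj] (v : V) : Finset V :=
  insert v (G.neighborFinset v)

/-- The closed neighbourhood `N⁺[U] = ⋃_{u ∈ U} N⁺[u]` of a set of vertices. -/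
def closedNbhdSet {V : Type*} [Fintype V] [DecidableEq V]
    (G : SimpleGraph V) [DecidableRel G.Adj] (U : Finset V) : Finset V :=
  U.biUnion (closedNbhd G)

/-- Semantic solution set of the CNF encoding `F_k`. -/
def SolSet {V : Type*} [Fintype V] [DecidableEq V]
    (G : SimpleGraph V) [DecidableRel G.Adj] (k : ℕ) : Set (V → Bool × Bool) :=
  {f | (Finset.univ.filter (fun v => (f v).1 = true)).card ≤ k ∧
       ∀ v : V, (f v).2 = true ↔ ∃ u ∈ closedNbhd G v, (f u).1 = true}

/-!
A solution is determined by its first coordinates, the set `U` of selected vertices: the second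
coordinates are then forced to be the indicator of `N⁺[U]`, because `u ∈ N⁺[v] ↔ v ∈ N⁺[u]`.
Conversely the encoding of any `U` with `|U| ≤ k` satisfies both constraints.
-/

section

variable {V : Type*} [Fintype V] [DecidableEq V] (G : SimpleGraph V) [DecidableRel G.Adj]

lemma mem_closedNbhd_comm (u v : V) : u ∈ closedNbhd G v ↔ v ∈ closedNbhd G u := by
  simp [closedNbhd, eq_comm, G.adj_comm]

lemma mem_closedNbhdSet_iff (U : Finset V) (v : V) :
    v ∈ closedNbhdSet G U ↔ ∃ u ∈ closedNbhd G v, u ∈ U := by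
  simp only [closedNbhdSet, Finset.mem_biUnion, mem_closedNbhd_comm G v, and_comm]

def encode (U : Finset V) : V → Bool × Bool :=
  fun v => (decide (v ∈ U), decide (v ∈ closedNbhdSet G U))

def selected (f : V → Bool × Bool) : Finset V :=
  Finset.univ.filter fun v => (f v).1 = true

lemma selected_encode (U : Finset V) : selected (encode G U) = U := by
  ext v
  simp [selected, encode]

lemma encode_mem_solSet {k : ℕ} {U : Finset V} (hU : U.card ≤ k) : encode G U ∈ SolSet G k :=
  ⟨show (selected (encode G U)).card ≤ k by rwa [selected_encode], fun v => by
    simpa only [encode, decide_eq_true_eq] using mem_closedNbhdSet_iff G U v⟩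

lemma encode_injective : Function.Injective (encode G) :=
  Function.LeftInverse.injective (selected_encode G)

lemma encode_selected_of_mem_solSet {k : ℕ} {f : V → Bool × Bool} (hf : f ∈ SolSet G k) :
    encode G (selected f) = f := by
  funext v
  refine Prod.ext (by simp [encode, selected]) (Bool.eq_iff_iff.mpr ?_)
  simp only [encode, decide_eq_true_eq, mem_closedNbhdSet_iff, selected, Finset.mem_filter,
    Finset.mem_univ, true_and, hf.2 v]

end

theorem subsets_bij_solset {V : Type*} [Fintype V] [DecidableEq V]
    (G : SimpleGraph V) [DecidableRel G.Adj] (k : ℕ) :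
    Set.BijOn
      (fun U : Finset V => fun v : V =>
        (decide (v ∈ U), decide (v ∈ closedNbhdSet G U)))
      {U : Finset V | U.card ≤ k} (SolSet G k) :=
  ⟨fun _ hU => encode_mem_solSet G hU,
   (encode_injective G).injOn,
   fun _ hf => ⟨selected _, hf.1, encode_selected_of_mem_solSet G hf⟩⟩
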